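/- arXiv:2211.12721 — 6 statements merged into one kernel-verified Lean document; each statement's English description precedes it below -/
import Mathlib

section
/- The hypergraph C₆⁻ (tight cycle on 6 vertices minus one edge) is a subhypergraph of the 2-blow-up of a single 3-uniform edge, i.e., of the complete tripartite 3-uniform hypergraph with three parts of size 2. -/
/-- `C₆⁻` (the tight cycle on 6 vertices minus one edge, here the edge at
index `0`) is a subhypergraph of the 2-blow-up of a single 3-uniform edge, i.e. of the
complete tripartite 3-uniform hypergraph with three parts of size 2 (vertex set
`Fin 3 × Fin 2`, edges the triples with pairwise distinct first coordinates). -/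
theorem C6_minus_sub_blowup_edge :
    ∃ f : ZMod 6 → Fin 3 × Fin 2, Function.Injective f ∧
      ∀ i : ZMod 6, i ≠ 0 →
        (f i).1 ≠ (f (i + 1)).1 ∧ (f i).1 ≠ (f (i + 2)).1 ∧ (f (i + 1)).1 ≠ (f (i + 2)).1 := by
  refine ⟨fun i => (⟨i.val % 3, Nat.mod_lt _ (by norm_num)⟩,
    ⟨i.val / 3 % 2, Nat.mod_lt _ (by norm_num)⟩), ?_, ?_⟩ <;> decide
end

section
/- The hypergraph C₇⁻ is a subhypergraph of the 2-blow-up of C₅⁻. Concretely, if v₁,…,v₅ are the vertices of C₅⁻ with edges {vᵢv_{i+1}v_{i+2} : i ≠ 4} (indices mod 5), and v₂′, v₃′ are duplicate copies of v₂ and v₃ in the 2-blow-up, then v₁ v₃ v₂ v₄ v₃′ v₅ v₂′ is the cyclic ordering of a copy of C₇⁻ whose missing edge is v₃′v₅v₂′. -/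
/-- `C₇⁻` is a subhypergraph of the 2-blow-up of `C₅⁻`.
Here `C₅⁻` has vertex set `ZMod 5` and edges `{j, j+1, j+2}` for `j ≠ 4`; its 2-blow-up has
vertex set `ZMod 5 × Fin 2`, an edge being a triple lying over three distinct base vertices
forming an edge of `C₅⁻`.  `C₇⁻` has vertex set `ZMod 7` and edges `{i, i+1, i+2}` for
`i ≠ 4`. -/
theorem C7_minus_sub_blowup_C5_minus :
    ∃ f : ZMod 7 → ZMod 5 × Fin 2, Function.Injective f ∧
      ∀ i : ZMod 7, i ≠ 4 → ∃ j : ZMod 5, j ≠ 4 ∧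
        ({(f i).1, (f (i + 1)).1, (f (i + 2)).1} : Finset (ZMod 5)) = {j, j + 1, j + 2} := by
  refine ⟨fun i => if i = 0 then (1, 0) else if i = 1 then (3, 0) else if i = 2 then (2, 0)
    else if i = 3 then (4, 0) else if i = 4 then (3, 1) else if i = 5 then (0, 0)
    else (2, 1), ?_, ?_⟩ <;> decide
end

section
/- For every integer ℓ ≥ 8, the hypergraph Cₗ⁻ is a subhypergraph of the 2-blow-up of C_{ℓ−3}⁻. -/
/-- Auxiliary map: sends index `v` (a value of `ZMod (m+3)`) to a vertex of the blow-up. -/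
def Faux (m v : ℕ) : ZMod m × Fin 2 :=
  if v = m then (0, 1)
  else if v = m + 1 then (1, 1)
  else if v = m + 2 then (-1, 1)
  else ((v : ZMod m), 0)

lemma Faux_lt (m v : ℕ) (h : v < m) : Faux m v = ((v : ZMod m), 0) := by
  unfold Faux; rw [if_neg (by omega), if_neg (by omega), if_neg (by omega)]

lemma Faux_m (m : ℕ) : Faux m m = (0, 1) := by unfold Faux; rw [if_pos rfl]

lemma Faux_m1 (m : ℕ) : Faux m (m + 1) = (1, 1) := by
  unfold Faux; rw [if_neg (by omega), if_pos rfl]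

lemma Faux_m2 (m : ℕ) : Faux m (m + 2) = (-1, 1) := by
  unfold Faux; rw [if_neg (by omega), if_neg (by omega), if_pos rfl]

/-- For every integer `ℓ ≥ 8`, the hypergraph `Cₗ⁻` (tight cycle on `ℓ`
vertices minus the edge at index `0`) is a subhypergraph of the 2-blow-up of `C_{ℓ-3}⁻`
(vertex set `ZMod (ℓ-3) × Fin 2`; a triple is an edge iff it lies over three distinct base
vertices forming an edge `{j, j+1, j+2}`, `j ≠ 0`, of `C_{ℓ-3}⁻`). -/
theorem Cl_minus_sub_blowup (ℓ : ℕ) (hℓ : 8 ≤ ℓ) :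
    ∃ f : ZMod ℓ → ZMod (ℓ - 3) × Fin 2, Function.Injective f ∧
      ∀ i : ZMod ℓ, i ≠ 0 → ∃ j : ZMod (ℓ - 3), j ≠ 0 ∧
        ({(f i).1, (f (i + 1)).1, (f (i + 2)).1} : Finset (ZMod (ℓ - 3))) =
          {j, j + 1, j + 2} := by
  obtain ⟨m, rfl⟩ : ∃ m, ℓ = m + 3 := ⟨ℓ - 3, by omega⟩
  have hm : 5 ≤ m := by omega
  haveI : NeZero (m + 3) := ⟨by omega⟩
  haveI : Fact (1 < m + 3) := ⟨by omega⟩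
  -- cast injectivity below m
  have hinj : ∀ a b : ℕ, a < m → b < m → ((a : ZMod m) = (b : ZMod m)) → a = b := by
    intro a b ha hb h
    have := congrArg ZMod.val h
    rwa [ZMod.val_cast_of_lt ha, ZMod.val_cast_of_lt hb] at this
  have hm1 : ((m - 1 : ℕ) : ZMod m) = -1 := by
    rw [Nat.cast_sub (show 1 ≤ m by omega), ZMod.natCast_self, Nat.cast_one, zero_sub]
  have hne10 : (1 : ZMod m) ≠ 0 := by
    intro h
    have := hinj 1 0 (by omega) (by omega) (by simpa using h)
    omega
  have hnegne0 : (-1 : ZMod m) ≠ 0 := by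
    rw [← hm1]
    intro h
    have := hinj (m - 1) 0 (by omega) (by omega) (by simpa using h)
    omega
  have hnegne1 : (-1 : ZMod m) ≠ 1 := by
    rw [← hm1]
    intro h
    have := hinj (m - 1) 1 (by omega) (by omega) (by simpa using h)
    omega
  have hval1 : (1 : ZMod (m + 3)).val = 1 := ZMod.val_one _
  have hvadd : ∀ i : ZMod (m + 3), (i + 1).val = (i.val + 1) % (m + 3) := by
    intro i; rw [ZMod.val_add, hval1]
  refine ⟨fun i => Faux m i.val, ?_, ?_⟩
  · -- injectivity
    intro a b hab
    simp only at hab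
    have ha : a.val < m + 3 := a.val_lt
    have hb : b.val < m + 3 := b.val_lt
    apply ZMod.val_injective
    by_cases h1 : a.val < m <;> by_cases h2 : b.val < m
    · rw [Faux_lt m _ h1, Faux_lt m _ h2] at hab
      exact hinj _ _ h1 h2 (congrArg Prod.fst hab)
    · exfalso
      rw [Faux_lt m _ h1] at hab
      have hb3 : b.val = m ∨ b.val = m + 1 ∨ b.val = m + 2 := by omega
      rcases hb3 with h | h | h <;> rw [h] at hab <;>
        simp [Faux_m, Faux_m1, Faux_m2, Prod.ext_iff] at hab
    · exfalso
      rw [Faux_lt m _ h2] at hab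
      have ha3 : a.val = m ∨ a.val = m + 1 ∨ a.val = m + 2 := by omega
      rcases ha3 with h | h | h <;> rw [h] at hab <;>
        simp [Faux_m, Faux_m1, Faux_m2, Prod.ext_iff] at hab
    · have ha3 : a.val = m ∨ a.val = m + 1 ∨ a.val = m + 2 := by omega
      have hb3 : b.val = m ∨ b.val = m + 1 ∨ b.val = m + 2 := by omega
      rcases ha3 with h | h | h <;> rcases hb3 with h' | h' | h' <;>
          rw [h, h'] at hab ⊢ <;>
          simp only [Faux_m, Faux_m1, Faux_m2, Prod.ext_iff] at hab <;>
        first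
          | rfl
          | (exact absurd hab.1 hne10)
          | (exact absurd hab.1.symm hne10)
          | (exact absurd hab.1 hnegne0)
          | (exact absurd hab.1.symm hnegne0)
          | (exact absurd hab.1 hnegne1)
          | (exact absurd hab.1.symm hnegne1)
  · -- edge condition
    intro i hi
    simp only
    have hvlt : i.val < m + 3 := i.val_lt
    have hv0 : i.val ≠ 0 := fun h => hi ((ZMod.val_eq_zero i).mp h)
    have hv1 : (i + 1).val = (i.val + 1) % (m + 3) := hvadd i
    have hv2 : (i + 2).val = ((i.val + 1) % (m + 3) + 1) % (m + 3) := by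
      rw [show i + 2 = i + 1 + 1 from by ring, hvadd, hv1]
    have hperm : ∀ x y z : ZMod m, ({x, y, z} : Finset (ZMod m)) = {z, x, y} := by
      intro x y z; ext w; simp; tauto
    have e1 : (-1 : ZMod m) + 1 = 0 := by ring
    have e2 : (-1 : ZMod m) + 2 = 1 := by ring
    by_cases hA : i.val + 2 < m
    · -- generic case
      have h1 : (i + 1).val = i.val + 1 := by rw [hv1, Nat.mod_eq_of_lt (by omega)]
      have h2 : (i + 2).val = i.val + 2 := by
        rw [hv2, Nat.mod_eq_of_lt (show i.val + 1 < m + 3 by omega),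
          Nat.mod_eq_of_lt (show i.val + 1 + 1 < m + 3 by omega)]
      refine ⟨(i.val : ZMod m), ?_, ?_⟩
      · intro h
        have := hinj i.val 0 (by omega) (by omega) (by simpa using h)
        omega
      · rw [h1, h2, Faux_lt m i.val (by omega), Faux_lt m _ (by omega), Faux_lt m _ (by omega)]
        push_cast
        rfl
    · have h5 : i.val = m - 2 ∨ i.val = m - 1 ∨ i.val = m ∨ i.val = m + 1 ∨ i.val = m + 2 := by
        omega
      rcases h5 with h | h | h | h | h
      · -- v = m - 2
        have h1 : (i + 1).val = m - 1 := by
          rw [hv1, h, show m - 2 + 1 = m - 1 by omega,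
            Nat.mod_eq_of_lt (show m - 1 < m + 3 by omega)]
        have h2 : (i + 2).val = m := by
          rw [hv2, h, show m - 2 + 1 = m - 1 by omega,
            Nat.mod_eq_of_lt (show m - 1 < m + 3 by omega), show m - 1 + 1 = m by omega,
            Nat.mod_eq_of_lt (show m < m + 3 by omega)]
        refine ⟨((m - 2 : ℕ) : ZMod m), ?_, ?_⟩
        · intro hc
          have := hinj (m - 2) 0 (by omega) (by omega) (by simpa using hc)
          omega
        · have ha1 : ((m - 2 : ℕ) : ZMod m) + 1 = ((m - 1 : ℕ) : ZMod m) := by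
            rw [← Nat.cast_one, ← Nat.cast_add, show m - 2 + 1 = m - 1 from by omega]
          have ha2 : ((m - 2 : ℕ) : ZMod m) + 2 = 0 := by
            rw [show (2 : ZMod m) = ((2 : ℕ) : ZMod m) from by push_cast; ring,
              ← Nat.cast_add, show m - 2 + 2 = m from by omega]
            exact ZMod.natCast_self m
          rw [h, h1, h2, Faux_lt m _ (by omega), Faux_lt m _ (by omega), Faux_m, ha1, ha2]
      · -- v = m - 1
        have h1 : (i + 1).val = m := by
          rw [hv1, h, show m - 1 + 1 = m by omega,
            Nat.mod_eq_of_lt (show m < m + 3 by omega)]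
        have h2 : (i + 2).val = m + 1 := by
          rw [hv2, h, show m - 1 + 1 = m by omega,
            Nat.mod_eq_of_lt (show m < m + 3 by omega),
            Nat.mod_eq_of_lt (show m + 1 < m + 3 by omega)]
        refine ⟨-1, hnegne0, ?_⟩
        rw [h, h1, h2, Faux_lt m _ (by omega), Faux_m, Faux_m1, e1, e2, hm1]
      · -- v = m
        have h1 : (i + 1).val = m + 1 := by
          rw [hv1, h, Nat.mod_eq_of_lt (show m + 1 < m + 3 by omega)]
        have h2 : (i + 2).val = m + 2 := by
          rw [hv2, h, Nat.mod_eq_of_lt (show m + 1 < m + 3 by omega),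
            Nat.mod_eq_of_lt (show m + 1 + 1 < m + 3 by omega)]
        refine ⟨-1, hnegne0, ?_⟩
        rw [h, h1, h2, Faux_m, Faux_m1, Faux_m2, e1, e2]
        exact hperm 0 1 (-1)
      · -- v = m + 1
        have h1 : (i + 1).val = m + 2 := by
          rw [hv1, h, Nat.mod_eq_of_lt (show m + 1 + 1 < m + 3 by omega)]
        have h2 : (i + 2).val = 0 := by
          rw [hv2, h, Nat.mod_eq_of_lt (show m + 1 + 1 < m + 3 by omega),
            show m + 1 + 1 + 1 = m + 3 from rfl, Nat.mod_self]
        refine ⟨-1, hnegne0, ?_⟩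
        rw [h, h1, h2, Faux_m1, Faux_m2, Faux_lt m 0 (by omega), e1, e2]
        rw [hperm 1 (-1) ((0 : ℕ) : ZMod m)]
        rw [show ((0 : ℕ) : ZMod m) = 0 from by push_cast; ring]
        exact hperm 0 1 (-1)
      · -- v = m + 2
        have h1 : (i + 1).val = 0 := by
          rw [hv1, h, show m + 2 + 1 = m + 3 from rfl, Nat.mod_self]
        have h2 : (i + 2).val = 1 := by
          rw [hv2, h, show m + 2 + 1 = m + 3 from rfl, Nat.mod_self,
            Nat.mod_eq_of_lt (show 0 + 1 < m + 3 by omega)]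
        refine ⟨-1, hnegne0, ?_⟩
        rw [h, h1, h2, Faux_m2, Faux_lt m 0 (by omega), Faux_lt m 1 (by omega), e1, e2]
        push_cast
        rfl
end

section
/- Let H be a 3-uniform hypergraph, let v, b be vertices, S a set of vertices, and P a set of ordered pairs of vertices disjoint from S, such that (v,S,b,P) is a nice picture. If there exist u ∈ S and (x,y) ∈ P with {u,x,y} an edge of H, then H contains a copy of C₅⁻ (with vertices u, b, v, x, y and missing edge {y,u,b}). -/
/-- `x` and `y` are adjacent in the link graph `L_v` of the 3-uniform hypergraph with
edge set `E`. -/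
def LinkAdj {V : Type*} [DecidableEq V] (E : Finset (Finset V)) (v x y : V) : Prop :=
  x ≠ y ∧ x ≠ v ∧ y ≠ v ∧ ({v, x, y} : Finset V) ∈ E

/-- `(v, S, b, P)` is a *nice picture*: `P` consists of ordered pairs avoiding `S`,
`S ⊆ N_{L_v}(b)`, and for every `u ∈ S` and `(x,y) ∈ P` the sequence `u, b, x, y` is a
path of length 3 in the link `L_v`. -/
def NicePicture {V : Type*} [DecidableEq V] (E : Finset (Finset V)) (v : V)
    (S : Finset V) (b : V) (P : Finset (V × V)) : Prop :=
  (∀ p ∈ P, p.1 ∉ S ∧ p.2 ∉ S) ∧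
  (∀ u ∈ S, LinkAdj E v u b) ∧
  (∀ u ∈ S, ∀ p ∈ P, ({u, b, p.1, p.2} : Finset V).card = 4 ∧
    LinkAdj E v u b ∧ LinkAdj E v b p.1 ∧ LinkAdj E v p.1 p.2)

lemma card3le' {V : Type*} [DecidableEq V] (a b c : V) : ({a, b, c} : Finset V).card ≤ 3 := by
  apply le_trans (Finset.card_insert_le _ _)
  have := Finset.card_insert_le b ({c} : Finset V)
  simp at this ⊢; omega

/-- If `(v,S,b,P)` is a nice picture and there are `u ∈ S` and
`(x,y) ∈ P` with `{u,x,y}` an edge, then `u, b, v, x, y` (in this cyclic order) form a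
copy of `C₅⁻` with missing edge `{y,u,b}`: the five vertices are pairwise distinct and the
other four consecutive triples are edges. -/
theorem nice_picture_gives_C5_minus {V : Type*} [DecidableEq V]
    (E : Finset (Finset V)) (v b : V) (S : Finset V) (P : Finset (V × V))
    (hnice : NicePicture E v S b P)
    (u x y : V) (hu : u ∈ S) (hxy : (x, y) ∈ P) (he : ({u, x, y} : Finset V) ∈ E) :
    ({u, b, v, x, y} : Finset V).card = 5 ∧
    ({u, b, v} : Finset V) ∈ E ∧ ({b, v, x} : Finset V) ∈ E ∧
    ({v, x, y} : Finset V) ∈ E ∧ ({x, y, u} : Finset V) ∈ E := by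
  obtain ⟨hP, hS, hpath⟩ := hnice
  obtain ⟨h4, ⟨hub, huv, hbv, hEub⟩, ⟨hbx, _, hxv, hEbx⟩, ⟨hxyne, _, hyv, hExy⟩⟩ :=
    hpath u hu (x, y) hxy
  simp only at h4 hEbx hExy
  refine ⟨?_, ?_, ?_, hExy, ?_⟩
  · have hux : u ≠ x := by
      intro h; subst h
      have hsub : ({u, b, u, y} : Finset V) ⊆ {u, b, y} := by intro z; simp; tauto
      have := Finset.card_le_card hsub
      have := card3le' u b y
      omega
    have huy : u ≠ y := by
      intro h; subst h
      have hsub : ({u, b, x, u} : Finset V) ⊆ {u, b, x} := by intro z; simp; tauto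
      have := Finset.card_le_card hsub
      have := card3le' u b x
      omega
    have hby : b ≠ y := by
      intro h; subst h
      have hsub : ({u, b, x, b} : Finset V) ⊆ {u, b, x} := by intro z; simp; tauto
      have := Finset.card_le_card hsub
      have := card3le' u b x
      omega
    have heq : ({u, b, v, x, y} : Finset V) = insert v {u, b, x, y} := by
      ext z; simp; tauto
    rw [heq, Finset.card_insert_of_notMem (by simp [huv.symm, hbv.symm, hxv.symm, hyv.symm]), h4]
  · have : ({u, b, v} : Finset V) = ({v, u, b} : Finset V) := by ext z; simp; tauto
    rw [this]; exact hEub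
  · have : ({b, v, x} : Finset V) = ({v, b, x} : Finset V) := by ext z; simp; tauto
    rw [this]; exact hEbx
  · have : ({x, y, u} : Finset V) = ({u, x, y} : Finset V) := by ext z; simp; tauto
    rw [this]; exact he
end

section
/- Let H be a C₅⁻-free 3-uniform hypergraph on vertex set V. Define H̃ on V₁ ∪ V₂ ∪ V₃, where each Vᵢ is a disjoint copy of V, with edges: (a) for each i, all edges of the copy of H inside Vᵢ, and (b) all transversal triples {v₁,v₂,v₃} with vᵢ ∈ Vᵢ. Then H̃ is also C₅⁻-free. -/
lemma fin3_pigeon : ∀ a b c d : Fin 3, a ≠ b → b ≠ c → a ≠ c → d ≠ b → d ≠ c → d = a := by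
  intro a b c d h1 h2 h3 h4 h5
  fin_cases a <;> fin_cases b <;> fin_cases c <;> fin_cases d <;> simp_all

lemma edge_dichotomy {V : Type} [DecidableEq V] (E : Set (Finset V))
    (a b c : Fin 3 × V) (hab : a ≠ b) (hbc : b ≠ c) (hac : a ≠ c)
    (h : ({a, b, c} : Finset (Fin 3 × V)) ∈
      {e : Finset (Fin 3 × V) |
        (∃ j : Fin 3, ∃ s ∈ E, e = s.image fun x => (j, x)) ∨
        (∃ x y z : V, e = {(0, x), (1, y), (2, z)})}) :
    (a.1 = b.1 ∧ b.1 = c.1 ∧ ({a.2, b.2, c.2} : Finset V) ∈ E) ∨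
    (a.1 ≠ b.1 ∧ b.1 ≠ c.1 ∧ a.1 ≠ c.1) := by
  rcases h with ⟨j, s, hs, he⟩ | ⟨x, y, z, he⟩
  · left
    have fst_eq : ∀ p ∈ ({a, b, c} : Finset (Fin 3 × V)), p.1 = j := by
      intro p hp
      rw [he] at hp
      obtain ⟨q, _, rfl⟩ := Finset.mem_image.mp hp
      rfl
    have haj := fst_eq a (by simp)
    have hbj := fst_eq b (by simp)
    have hcj := fst_eq c (by simp)
    refine ⟨haj.trans hbj.symm, hbj.trans hcj.symm, ?_⟩
    have hs2 : ({a, b, c} : Finset (Fin 3 × V)).image Prod.snd = s := by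
      rw [he, Finset.image_image]
      simp
    have : ({a.2, b.2, c.2} : Finset V) = s := by
      rw [← hs2]
      simp [Finset.image_insert]
    rw [this]; exact hs
  · right
    have key : ∀ p ∈ ({a, b, c} : Finset (Fin 3 × V)), ∀ q ∈ ({a, b, c} : Finset (Fin 3 × V)),
        p.1 = q.1 → p = q := by
      intro p hp q hq hpq
      rw [he] at hp hq
      simp only [Finset.mem_insert, Finset.mem_singleton] at hp hq
      rcases hp with rfl | rfl | rfl <;> rcases hq with rfl | rfl | rfl <;>
        first | rfl | simp_all
    refine ⟨fun h' => hab (key a (by simp) b (by simp) h'),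
            fun h' => hbc (key b (by simp) c (by simp) h'),
            fun h' => hac (key a (by simp) c (by simp) h')⟩

/-- Let `H` be a `C₅⁻`-free 3-uniform hypergraph with edge set `E` on
vertex set `V`.  Form `H̃` on `Fin 3 × V` whose edges are (a) the edges of the three
copies of `H` inside the parts, and (b) all transversal triples.  Then `H̃` is also
`C₅⁻`-free.  (`C₅⁻` has vertices `ZMod 5` and edges `{i, i+1, i+2}` for `i ≠ 4`.) -/
theorem blowup_construction_C5_minus_free (V : Type) [DecidableEq V]
    (E : Set (Finset V))
    (hfree : ¬ ∃ f : ZMod 5 → V, Function.Injective f ∧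
      ∀ i : ZMod 5, i ≠ 4 → ({f i, f (i + 1), f (i + 2)} : Finset V) ∈ E) :
    ¬ ∃ f : ZMod 5 → Fin 3 × V, Function.Injective f ∧
      ∀ i : ZMod 5, i ≠ 4 → ({f i, f (i + 1), f (i + 2)} : Finset (Fin 3 × V)) ∈
        {e : Finset (Fin 3 × V) |
          (∃ j : Fin 3, ∃ s ∈ E, e = s.image fun x => (j, x)) ∨
          (∃ x y z : V, e = {(0, x), (1, y), (2, z)})} := by
  rintro ⟨f, hf, hE⟩
  have hne : ∀ i j : ZMod 5, i ≠ j → f i ≠ f j := fun i j h e => h (hf e)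
  have e0 := hE 0 (by decide)
  have e1 := hE 1 (by decide)
  have e2 := hE 2 (by decide)
  have e3 := hE 3 (by decide)
  rw [show (0:ZMod 5)+1 = 1 from by decide, show (0:ZMod 5)+2 = 2 from by decide] at e0
  rw [show (1:ZMod 5)+1 = 2 from by decide, show (1:ZMod 5)+2 = 3 from by decide] at e1
  rw [show (2:ZMod 5)+1 = 3 from by decide, show (2:ZMod 5)+2 = 4 from by decide] at e2
  rw [show (3:ZMod 5)+1 = 4 from by decide, show (3:ZMod 5)+2 = 0 from by decide] at e3
  have H0 := edge_dichotomy E (f 0) (f 1) (f 2)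
    (hne 0 1 (by decide)) (hne 1 2 (by decide)) (hne 0 2 (by decide)) e0
  have H1 := edge_dichotomy E (f 1) (f 2) (f 3)
    (hne 1 2 (by decide)) (hne 2 3 (by decide)) (hne 1 3 (by decide)) e1
  have H2 := edge_dichotomy E (f 2) (f 3) (f 4)
    (hne 2 3 (by decide)) (hne 3 4 (by decide)) (hne 2 4 (by decide)) e2
  have H3 := edge_dichotomy E (f 3) (f 4) (f 0)
    (hne 3 4 (by decide)) (hne 4 0 (by decide)) (hne 3 0 (by decide)) e3
  rcases H0 with ⟨g01, g12, m0⟩ | ⟨n01, n12, n02⟩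
  · -- all same part
    rcases H1 with ⟨_, g23, m1⟩ | ⟨n12', _, _⟩
    swap
    · exact absurd g12 n12'
    rcases H2 with ⟨_, g34, m2⟩ | ⟨n23', _, _⟩
    swap
    · exact absurd g23 n23'
    rcases H3 with ⟨_, _, m3⟩ | ⟨n34', _, _⟩
    swap
    · exact absurd g34 n34'
    apply hfree
    refine ⟨fun i => (f i).2, ?_, ?_⟩
    · have hall : ∀ i : ZMod 5, (f i).1 = (f 0).1 := by
        have h5 : ∀ i : ZMod 5, i = 0 ∨ i = 1 ∨ i = 2 ∨ i = 3 ∨ i = 4 := by decide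
        intro i
        rcases h5 i with rfl | rfl | rfl | rfl | rfl
        · rfl
        · exact g01.symm
        · exact (g01.trans g12).symm
        · exact (g01.trans (g12.trans g23)).symm
        · exact (g01.trans (g12.trans (g23.trans g34))).symm
      intro i j hij
      apply hf
      exact Prod.ext_iff.mpr ⟨(hall i).trans (hall j).symm, hij⟩
    · intro i hi
      have h5 : ∀ i : ZMod 5, i = 0 ∨ i = 1 ∨ i = 2 ∨ i = 3 ∨ i = 4 := by decide
      rcases h5 i with rfl | rfl | rfl | rfl | rfl
      · rw [show (0:ZMod 5)+1 = 1 from by decide, show (0:ZMod 5)+2 = 2 from by decide]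
        exact m0
      · rw [show (1:ZMod 5)+1 = 2 from by decide, show (1:ZMod 5)+2 = 3 from by decide]
        exact m1
      · rw [show (2:ZMod 5)+1 = 3 from by decide, show (2:ZMod 5)+2 = 4 from by decide]
        exact m2
      · rw [show (3:ZMod 5)+1 = 4 from by decide, show (3:ZMod 5)+2 = 0 from by decide]
        exact m3
      · exact absurd rfl hi
  · -- transversal case
    rcases H1 with ⟨g12', _, _⟩ | ⟨_, n23, n13⟩
    · exact absurd g12' n12
    rcases H2 with ⟨g23', _, _⟩ | ⟨_, n34, n24⟩
    · exact absurd g23' n23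
    have e30 : (f 3).1 = (f 0).1 :=
      fin3_pigeon (f 0).1 (f 1).1 (f 2).1 (f 3).1 n01 n12 n02
        (fun h => n13 h.symm) (fun h => n23 h.symm)
    have e41 : (f 4).1 = (f 1).1 := by
      apply fin3_pigeon (f 1).1 (f 2).1 (f 0).1 (f 4).1 n12
        (fun h => n02 h.symm) (fun h => n01 h.symm) (fun h => n24 h.symm)
      intro h
      exact n34 (e30.trans h.symm)
    rcases H3 with ⟨g34', _, _⟩ | ⟨_, _, n30⟩
    · exact absurd g34' n34
    exact absurd e30 n30
end

section
/- Let F be a 3-uniform hypergraph and F(2) its 2-blow-up. If for some ε > 0 and all sufficiently large n every 3-uniform hypergraph on n vertices with minimum codegree at least εn contains at least δn^{v(F)} copies of F (for some fixed δ > 0), then for all sufficiently large n every 3-uniform hypergraph on n vertices with minimum codegree at least 2εn contains a copy of F(2). -/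
/-!
For `n` large, a hypergraph on `n` vertices of minimum codegree `2εn ≥ εn` has at least
`δ n^{v(F)}` copies of `F`, a `δ`-dense subset of `V^W`. By Erdős's box theorem (the hypergraph
Kővári–Sós–Turán argument) a dense subset of `V^W` contains a box `∏ w, {S w 0, S w 1}` with
`S w 0 ≠ S w 1`; every section `w ↦ S w (f w)` of the box is then a copy of `F`, which makes
`(w, i) ↦ S w i` a copy of `F(2)`. The box theorem is proved one coordinate at a time: by
Cauchy–Schwarz, some pair of distinct values of the new coordinate has a `δ²/2`-dense set of
common extensions.
-/

open Finset Function

theorem injective_fin_two_iff {V : Type*} {p : Fin 2 → V} : Injective p ↔ p 0 ≠ p 1 := by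
  refine ⟨fun h e => zero_ne_one (h e), fun h i j hij => ?_⟩
  fin_cases i <;> fin_cases j <;> simp_all [eq_comm]

namespace Finset

variable {V X : Type*} [Fintype V] [Fintype X] [DecidableEq V] [DecidableEq X]

def commonNbhd {κ : Type*} [Fintype κ] (A : Finset (V × X)) (p : κ → V) : Finset X :=
  {x | ∀ j, (p j, x) ∈ A}

def nbhd (A : Finset (V × X)) (x : X) : Finset V := {v | (v, x) ∈ A}

theorem sum_card_nbhd (A : Finset (V × X)) : ∑ x, #(A.nbhd x) = #A := by
  simp only [nbhd, card_filter]
  rw [← Fintype.sum_prod_type_right (f := fun q => if q ∈ A then 1 else 0), sum_boole]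
  simp

theorem sum_card_commonNbhd {κ : Type*} [Fintype κ] [DecidableEq κ] (A : Finset (V × X)) :
    ∑ p : κ → V, #(A.commonNbhd p) = ∑ x, #(A.nbhd x) ^ Fintype.card κ := by
  calc ∑ p : κ → V, #(A.commonNbhd p)
      = ∑ x, #(univ.bipartiteBelow (fun (p : κ → V) x => ∀ j, (p j, x) ∈ A) x) :=
        sum_card_bipartiteAbove_eq_sum_card_bipartiteBelow _
    _ = ∑ x, #(A.nbhd x) ^ Fintype.card κ := by
        refine sum_congr rfl fun x _ => ?_
        rw [← card_univ, ← prod_const, ← Fintype.card_piFinset]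
        congr 1
        ext p
        simp [nbhd]

theorem sq_card_le_card_mul_sum_card_commonNbhd (A : Finset (V × X)) :
    #A ^ 2 ≤ Fintype.card X * ∑ p : Fin 2 → V, #(A.commonNbhd p) := by
  rw [sum_card_commonNbhd, Fintype.card_fin, ← sum_card_nbhd, ← card_univ]
  exact sq_sum_le_card_mul_sum_sq

theorem card_filter_not_injective_le :
    #({p : Fin 2 → V | ¬ Injective p} : Finset _) ≤ Fintype.card V := by
  rw [← card_univ]
  refine card_le_card_of_injOn (· 0) (fun _ _ => mem_univ _) fun p hp q hq (hpq : p 0 = q 0) => ?_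
  have hp : p 0 = p 1 := by simpa [injective_fin_two_iff] using hp
  have hq : q 0 = q 1 := by simpa [injective_fin_two_iff] using hq
  exact funext <| Fin.forall_fin_two.2 ⟨hpq, by rw [← hp, ← hq, hpq]⟩

theorem le_sum_card_commonNbhd (A : Finset (V × X)) {δ : ℝ} (hδ : 0 ≤ δ)
    (hA : δ * Fintype.card V * Fintype.card X ≤ #A) :
    δ ^ 2 * Fintype.card V ^ 2 * Fintype.card X ≤
      ∑ p : Fin 2 → V, (#(A.commonNbhd p) : ℝ) := by
  have hCS : (#A : ℝ) ^ 2 ≤ Fintype.card X * ∑ p : Fin 2 → V, (#(A.commonNbhd p) : ℝ) := by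
    exact_mod_cast sq_card_le_card_mul_sum_card_commonNbhd A
  have := (pow_le_pow_left₀ (by positivity) hA 2).trans hCS
  rcases (Nat.cast_nonneg (α := ℝ) (Fintype.card X)).eq_or_lt with hm | hm
  · rw [← hm, mul_zero]
    exact sum_nonneg fun p _ => Nat.cast_nonneg _
  · nlinarith

theorem exists_injective_le_card_commonNbhd [Nontrivial V] (A : Finset (V × X)) {δ : ℝ}
    (hδ : 0 ≤ δ) (hA : δ * Fintype.card V * Fintype.card X ≤ #A)
    (hV : 2 ≤ δ ^ 2 * Fintype.card V) :
    ∃ p : Fin 2 → V, Injective p ∧ δ ^ 2 / 2 * Fintype.card X ≤ #(A.commonNbhd p) := by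
  set I : Finset (Fin 2 → V) := {p | Injective p}
  have hT := A.le_sum_card_commonNbhd hδ hA
  have hnonI : (#({p : Fin 2 → V | ¬ Injective p} : Finset _) : ℝ) ≤ Fintype.card V := by
    exact_mod_cast card_filter_not_injective_le
  have hI : (#I : ℝ) ≤ Fintype.card V ^ 2 := by
    exact_mod_cast (card_le_univ I).trans_eq (by simp)
  have hc : ∀ p : Fin 2 → V, (#(A.commonNbhd p) : ℝ) ≤ Fintype.card X := fun p => by
    exact_mod_cast card_le_univ _
  have hsplit := sum_filter_add_sum_filter_not univ (Injective ·)
    fun p : Fin 2 → V => (#(A.commonNbhd p) : ℝ)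
  set n : ℝ := (Fintype.card V : ℝ)
  set m : ℝ := (Fintype.card X : ℝ)
  set c : (Fin 2 → V) → ℝ := fun p => #(A.commonNbhd p)
  have hsumNonI : ∑ p ∈ univ.filter (¬ Injective ·), c p ≤ n * m :=
    calc ∑ p ∈ univ.filter (¬ Injective ·), c p ≤ ∑ p ∈ univ.filter (¬ Injective ·), m :=
          sum_le_sum fun p _ => hc p
      _ ≤ n * m := by rw [sum_const, nsmul_eq_mul]; gcongr
  have hsumI : ∑ _ ∈ I, δ ^ 2 / 2 * m ≤ ∑ p ∈ I, c p :=
    calc ∑ _ ∈ I, δ ^ 2 / 2 * m = #I * (δ ^ 2 / 2 * m) := by rw [sum_const, nsmul_eq_mul]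
      _ ≤ n ^ 2 * (δ ^ 2 / 2 * m) := by gcongr
      _ ≤ δ ^ 2 * n ^ 2 * m - n * m := by
          nlinarith [mul_le_mul_of_nonneg_right hV (by positivity : 0 ≤ n * m)]
      _ ≤ ∑ p ∈ I, c p := by linarith
  obtain ⟨a, b, hab⟩ := exists_pair_ne V
  have hIne : I.Nonempty := ⟨![a, b], by simp [I, injective_fin_two_iff, hab]⟩
  obtain ⟨p, hp, hcp⟩ := exists_le_of_sum_le hIne hsumI
  exact ⟨p, by simpa [I] using hp, hcp⟩

end Finset

def Finset.ContainsBox {ι V : Type*} (A : Finset (ι → V)) : Prop :=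
  ∃ S : ι → Fin 2 → V, (∀ i, Injective (S i)) ∧ ∀ f : ι → Fin 2, (fun i => S i (f i)) ∈ A

def DenseSubsetsContainBoxes (ι : Type*) [Fintype ι] : Prop :=
  ∀ δ : ℝ, 0 < δ → ∃ N : ℕ, ∀ (V : Type) [Fintype V] (A : Finset (ι → V)),
    N ≤ Fintype.card V → δ * Fintype.card V ^ Fintype.card ι ≤ #A → A.ContainsBox

namespace DenseSubsetsContainBoxes

theorem pempty : DenseSubsetsContainBoxes PEmpty := by
  refine fun δ hδ => ⟨0, fun V _ A _ hA => ?_⟩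
  obtain ⟨a, ha⟩ : A.Nonempty := card_pos.1 <| by
    simp only [Fintype.card_eq_zero, pow_zero, mul_one] at hA
    exact_mod_cast hδ.trans_le hA
  exact ⟨fun i => i.elim, fun i => i.elim, fun f => by convert ha using 1; ext i; exact i.elim⟩

theorem of_equiv {α β : Type*} [Fintype α] [Fintype β] (e : α ≃ β)
    (h : DenseSubsetsContainBoxes α) : DenseSubsetsContainBoxes β := by
  intro δ hδ
  obtain ⟨N, hN⟩ := h δ hδ
  refine ⟨N, fun V _ A hV hA => ?_⟩
  classical
  let eV : (α → V) ≃ (β → V) := e.arrowCongr (Equiv.refl V)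
  obtain ⟨S, hS, hSA⟩ := hN V (A.map eV.symm.toEmbedding) hV
    (by rwa [card_map, Fintype.card_congr e])
  refine ⟨S ∘ e.symm, fun i => hS _, fun f => ?_⟩
  have := hSA (f ∘ e)
  rw [mem_map_equiv, Equiv.symm_symm] at this
  convert this using 1
  funext i
  simp [eV]

theorem option {ι : Type*} [Fintype ι] (h : DenseSubsetsContainBoxes ι) :
    DenseSubsetsContainBoxes (Option ι) := by
  intro δ hδ
  obtain ⟨N, hN⟩ := h (δ ^ 2 / 2) (by positivity)
  refine ⟨max N (max 2 ⌈2 / δ ^ 2⌉₊), fun V _ A hV hA => ?_⟩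
  classical
  have : Nontrivial V := Fintype.one_lt_card_iff_nontrivial.1 (by omega)
  have hδV : 2 ≤ δ ^ 2 * Fintype.card V := by
    have : 2 / δ ^ 2 ≤ Fintype.card V := Nat.ceil_le.1 (by omega)
    rwa [div_le_iff₀ (by positivity), mul_comm] at this
  let B : Finset (V × (ι → V)) := A.map Equiv.piOptionEquivProd.toEmbedding
  have hB : δ * Fintype.card V * Fintype.card (ι → V) ≤ #B := by
    rw [card_map, Fintype.card_fun, mul_assoc, Nat.cast_pow, ← pow_succ']
    simpa using hA
  obtain ⟨p, hp, hpB⟩ := B.exists_injective_le_card_commonNbhd hδ.le hB hδV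
  obtain ⟨S, hS, hSB⟩ := hN V (B.commonNbhd p) (by omega) (by simpa using hpB)
  refine ⟨fun i => i.elim p S, fun i => i.rec hp hS, fun f => ?_⟩
  rw [← mem_map' Equiv.piOptionEquivProd.toEmbedding]
  have := hSB (f ∘ some)
  simp only [commonNbhd, mem_filter] at this
  exact this.2 (f none)

end DenseSubsetsContainBoxes

theorem denseSubsetsContainBoxes (ι : Type*) [Fintype ι] : DenseSubsetsContainBoxes ι := by
  refine Fintype.induction_empty_option (P := fun ι _ => DenseSubsetsContainBoxes ι)
    (fun α β _ e h => @DenseSubsetsContainBoxes.of_equiv α β (.ofEquiv β e.symm) _ e h)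
    .pempty (fun _ _ h => h.option) ι

section BlowUp

variable {W V : Type*} [DecidableEq W] {S : W → Fin 2 → V}

theorem injective_uncurry_of_forall_injective (hS : ∀ w, Injective (S w))
    (hsec : ∀ f : W → Fin 2, Injective fun w => S w (f w)) : Injective (uncurry S) := by
  rintro ⟨w, i⟩ ⟨w', i'⟩ h
  by_cases hw : w = w'
  · subst hw
    exact Prod.ext rfl (hS w h)
  · exact absurd (hsec (update (fun _ => i) w' i') (by simpa [update_of_ne hw] using h)) hw

theorem insert_mem_of_forall_image_mem [DecidableEq V] {EF : Finset (Finset W)}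
    {E : Finset (Finset V)}
    (hsec : ∀ f : W → Fin 2, ∀ e ∈ EF, e.image (fun w => S w (f w)) ∈ E)
    (x y z : W × Fin 2) (hxy : x.1 ≠ y.1) (hxz : x.1 ≠ z.1) (hyz : y.1 ≠ z.1)
    (he : ({x.1, y.1, z.1} : Finset W) ∈ EF) :
    ({uncurry S x, uncurry S y, uncurry S z} : Finset V) ∈ E := by
  simpa [update_of_ne, hxy, hxz, hyz, image_insert, uncurry_def]
    using hsec (update (update (fun _ => x.2) y.1 y.2) z.1 z.2) _ he

end BlowUp

theorem supersaturation_to_blowup_general (W : Type) [Fintype W] [DecidableEq W]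
    (EF : Finset (Finset W))
    (ε δ : ℝ) (hε : 0 < ε) (hδ : 0 < δ)
    (hsat : ∃ N : ℕ, ∀ (V : Type) [Fintype V] [DecidableEq V] (E : Finset (Finset V)),
      (∀ e ∈ E, e.card = 3) → N ≤ Fintype.card V →
      (∀ u v : V, u ≠ v →
        ε * (Fintype.card V : ℝ) ≤ ((E.filter fun e => u ∈ e ∧ v ∈ e).card : ℝ)) →
      δ * (Fintype.card V : ℝ) ^ (Fintype.card W) ≤
        (Nat.card {g : W → V // Function.Injective g ∧ ∀ e ∈ EF, e.image g ∈ E} : ℝ)) :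
    ∃ N' : ℕ, ∀ (V : Type) [Fintype V] [DecidableEq V] (E : Finset (Finset V)),
      (∀ e ∈ E, e.card = 3) → N' ≤ Fintype.card V →
      (∀ u v : V, u ≠ v →
        2 * ε * (Fintype.card V : ℝ) ≤ ((E.filter fun e => u ∈ e ∧ v ∈ e).card : ℝ)) →
      ∃ g : W × Fin 2 → V, Function.Injective g ∧
        ∀ x y z : W × Fin 2, x.1 ≠ y.1 → x.1 ≠ z.1 → y.1 ≠ z.1 →
          ({x.1, y.1, z.1} : Finset W) ∈ EF → ({g x, g y, g z} : Finset V) ∈ E := by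
  obtain ⟨N, hN⟩ := hsat
  obtain ⟨N₀, hN₀⟩ := denseSubsetsContainBoxes W δ hδ
  refine ⟨max N N₀, fun V _ _ E hE hV hcodeg => ?_⟩
  have hcopies := hN V E hE (le_of_max_le_left hV) fun u v huv => le_trans
    (by nlinarith [mul_nonneg hε.le (Nat.cast_nonneg (α := ℝ) (Fintype.card V))]) (hcodeg u v huv)
  rw [Nat.card_eq_fintype_card, Fintype.card_subtype] at hcopies
  obtain ⟨S, hS, hSA⟩ := hN₀ V _ (le_of_max_le_right hV) hcopies
  simp only [mem_filter_univ] at hSA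
  exact ⟨uncurry S, injective_uncurry_of_forall_injective hS fun f => (hSA f).1,
    insert_mem_of_forall_image_mem fun f => (hSA f).2⟩

/-- (Supersaturation to blow-up transference.)  Let `F` be a 3-uniform
hypergraph on vertex set `W` with edge set `EF`.  Suppose that for some `ε, δ > 0` and all
sufficiently large `n`, every 3-uniform hypergraph on `n` vertices with minimum codegree
at least `εn` contains at least `δ·n^{v(F)}` copies of `F` (injective edge-preserving
maps).  Then for all sufficiently large `n`, every 3-uniform hypergraph on `n` vertices
with minimum codegree at least `2εn` contains a copy of the 2-blow-up `F(2)`. -/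
theorem supersaturation_to_blowup (W : Type) [Fintype W] [DecidableEq W]
    (EF : Finset (Finset W)) (h3 : ∀ e ∈ EF, e.card = 3)
    (ε δ : ℝ) (hε : 0 < ε) (hδ : 0 < δ)
    (hsat : ∃ N : ℕ, ∀ (V : Type) [Fintype V] [DecidableEq V] (E : Finset (Finset V)),
      (∀ e ∈ E, e.card = 3) → N ≤ Fintype.card V →
      (∀ u v : V, u ≠ v →
        ε * (Fintype.card V : ℝ) ≤ ((E.filter fun e => u ∈ e ∧ v ∈ e).card : ℝ)) →
      δ * (Fintype.card V : ℝ) ^ (Fintype.card W) ≤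
        (Nat.card {g : W → V // Function.Injective g ∧ ∀ e ∈ EF, e.image g ∈ E} : ℝ)) :
    ∃ N' : ℕ, ∀ (V : Type) [Fintype V] [DecidableEq V] (E : Finset (Finset V)),
      (∀ e ∈ E, e.card = 3) → N' ≤ Fintype.card V →
      (∀ u v : V, u ≠ v →
        2 * ε * (Fintype.card V : ℝ) ≤ ((E.filter fun e => u ∈ e ∧ v ∈ e).card : ℝ)) →
      ∃ g : W × Fin 2 → V, Function.Injective g ∧
        ∀ x y z : W × Fin 2, x.1 ≠ y.1 → x.1 ≠ z.1 → y.1 ≠ z.1 →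
          ({x.1, y.1, z.1} : Finset W) ∈ EF → ({g x, g y, g z} : Finset V) ∈ E :=
  supersaturation_to_blowup_general W EF ε δ hε hδ hsat
end
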